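/- arXiv:1610.08843 — 2 statements merged into one kernel-verified Lean document; each statement's English description precedes it below -/
import Mathlib

section
/- Given a finite chain of lists of names ã₁ ≻ ã₂ ≻ ⋯ ≻ ã_k (where ã ≺ b̃ means ã is obtained from b̃ = b₁⋯bₙ by removing a nonempty prefix b₁⋯b_j and appending j fresh names not occurring in b̃), with all lists of equal length, k greater than the length of ã₁, and such that once a name is removed from some ã_i it never reappears in any later ã_j, there exists n ≤ |ã₁| such that for all j ≥ n the lists ã₁ and ã_j are disjoint. -/
/-!
Each step `c (j + 1) ≺ c j` shifts the surviving names of `c j` at least one position to the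
left, and the names it appends are fresh. A name of `c 0` that is still present in `c j` has,
by the no-reappearance condition, been present all along, so it sits at a position `i` with
`i + j < |c 0|`; hence no name of `c 0` survives to step `|c 0|`.
-/

/-- `Prec u x` (written `u ≺ x` in the paper): `u` is obtained from `x = x₁⋯xₙ`
by removing a nonempty prefix `x₁⋯x_k` (with `k ≥ 1`) and appending `k` fresh
names `a₁⋯a_k` not occurring in `x`. -/
def Prec {α : Type*} (u x : List α) : Prop :=
  ∃ (k : ℕ) (a : List α), 1 ≤ k ∧ k ≤ x.length ∧ a.length = k ∧
    u = x.drop k ++ a ∧ ∀ b ∈ a, b ∉ x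

section Chain

variable {α : Type*}

theorem Prec.mem_drop_succ {u x : List α} (h : Prec u x) {a : α} {i : ℕ}
    (hu : a ∈ u.drop i) (hx : a ∈ x) : a ∈ x.drop (i + 1) := by
  obtain ⟨m, fresh, hm, -, -, rfl, hfresh⟩ := h
  rw [List.drop_append, List.mem_append, List.drop_drop] at hu
  rcases hu with hu | hu
  · exact List.drop_subset_drop_left x (by omega) hu
  · exact absurd hx (hfresh a (List.mem_of_mem_drop hu))

variable {k : ℕ} {c : ℕ → List α}

theorem mem_of_mem_zero_of_mem
    (hnore : ∀ i a, i + 1 < k → a ∈ c i → a ∉ c (i + 1) → ∀ j, i < j → j < k → a ∉ c j)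
    {a : α} {j : ℕ} (h0 : a ∈ c 0) (hj : a ∈ c j) (hjk : j < k) :
    ∀ l ≤ j, a ∈ c l
  | 0, _ => h0
  | l + 1, hl => by
    by_contra hal
    exact hnore l a (by omega) (mem_of_mem_zero_of_mem hnore h0 hj hjk l (by omega)) hal j
      (by omega) hjk hj

theorem add_lt_length_of_mem_drop (hchain : ∀ i, i + 1 < k → Prec (c (i + 1)) (c i))
    {a : α} {j : ℕ} (hjk : j < k) (hmem : ∀ l ≤ j, a ∈ c l) {i : ℕ} (ha : a ∈ (c j).drop i) :
    i + j < (c 0).length := by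
  induction j generalizing i with
  | zero =>
    have := List.length_pos_of_mem ha
    rw [List.length_drop] at this
    omega
  | succ j ih =>
    have := ih (by omega) (fun l hl => hmem l (by omega))
      ((hchain j hjk).mem_drop_succ ha (hmem j (by omega)))
    omega

end Chain

theorem chain_eventually_disjoint_general {α : Type*} (k : ℕ) (c : ℕ → List α)
    (hchain : ∀ i, i + 1 < k → Prec (c (i + 1)) (c i))
    (hnore : ∀ i a, i + 1 < k → a ∈ c i → a ∉ c (i + 1) →
      ∀ j, i < j → j < k → a ∉ c j) :
    ∃ n ≤ (c 0).length, ∀ j, n ≤ j → j < k → ∀ a ∈ c 0, a ∉ c j := by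
  refine ⟨(c 0).length, le_rfl, fun j hnj hjk a ha haj => ?_⟩
  have := add_lt_length_of_mem_drop hchain hjk (mem_of_mem_zero_of_mem hnore ha haj hjk)
    (i := 0) (by simpa using haj)
  omega

/-- Lemma A.3 of the paper: for a finite chain `ã₁ ≻ ã₂ ≻ ⋯ ≻ ã_k`
(here `c 0 ≻ c 1 ≻ ⋯ ≻ c (k-1)`), with all lists of equal length,
`k > |ã₁|`, and such that once a name is removed it never reappears,
there exists `n ≤ |ã₁|` such that for all `j ≥ n` (within the chain)
the lists `ã₁` and `ã_j` are disjoint. -/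
theorem chain_eventually_disjoint {α : Type*} (k : ℕ) (c : ℕ → List α)
    (hk : (c 0).length < k)
    (hchain : ∀ i, i + 1 < k → Prec (c (i + 1)) (c i))
    (hlen : ∀ i j, i < k → j < k → (c i).length = (c j).length)
    (hnore : ∀ i a, i + 1 < k → a ∈ c i → a ∉ c (i + 1) →
      ∀ j, i < j → j < k → a ∉ c j) :
    ∃ n ≤ (c 0).length, ∀ j, n ≤ j → j < k → ∀ a ∈ c 0, a ∉ c j :=
  chain_eventually_disjoint_general k c hchain hnore
end

section
/- For the relation ≺ on finite lists of names (ũ ≺ x̃ iff ũ replaces a nonempty prefix of x̃ by names not occurring in x̃, preserving length), there is no infinite descending chain ã₁ ≻ ã₂ ≻ ã₃ ≻ ⋯ in which, once a name is removed, it never reappears: any such chain restricted to sharing a name with ã₁ has length at most |ã₁| + 1. -/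
section

variable {α : Type*}

def NoReappearance (c : ℕ → List α) : Prop :=
  ∀ i a, a ∈ c i → a ∉ c (i + 1) → ∀ j, i < j → a ∉ c j

theorem Prec.exists_drop_append {u x l r : List α} {m : ℕ} (h : Prec u x)
    (hx : x = l.drop m ++ r) :
    ∃ k s, 1 ≤ k ∧ u = l.drop (m + k) ++ s ∧ ∀ b ∈ s, b ∈ r ∨ b ∉ x := by
  obtain ⟨k, a, hk, -, -, rfl, hfresh⟩ := h
  refine ⟨k, r.drop (k - (l.drop m).length) ++ a, hk, ?_, ?_⟩
  · rw [hx, List.drop_append, List.drop_drop, List.append_assoc]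
  · intro b hb
    rcases List.mem_append.mp hb with hb | hb
    · exact .inl (List.mem_of_mem_drop hb)
    · exact .inr (hfresh b hb)

namespace NoReappearance

variable {c : ℕ → List α}

theorem mem_of_mem_of_mem (hc : NoReappearance c) {b : α} {i j m : ℕ} (hij : i ≤ j)
    (hjm : j ≤ m) (hi : b ∈ c i) (hm : b ∈ c m) : b ∈ c j := by
  induction j, hij using Nat.le_induction with
  | base => exact hi
  | succ j _ ih =>
    by_contra hj
    exact hc j b (ih (by omega)) hj m (by omega) hm

theorem not_mem_zero_of_not_mem_of_mem_succ (hc : NoReappearance c) {b : α} {j : ℕ}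
    (hj : b ∉ c j) (hj' : b ∈ c (j + 1)) : b ∉ c 0 :=
  fun h0 ↦ hj (hc.mem_of_mem_of_mem j.zero_le j.le_succ h0 hj')

end NoReappearance

theorem exists_eq_drop_append_of_chain {c : ℕ → List α} (hchain : ∀ i, Prec (c (i + 1)) (c i))
    (hc : NoReappearance c) (j : ℕ) :
    ∃ m s, j ≤ m ∧ c j = (c 0).drop m ++ s ∧ ∀ b ∈ s, b ∉ c 0 := by
  induction j with
  | zero => exact ⟨0, [], le_rfl, by simp, by simp⟩
  | succ j ih =>
    obtain ⟨m, s, hjm, hcj, hs⟩ := ih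
    obtain ⟨k, s', hk, hcj', hs'⟩ := (hchain j).exists_drop_append hcj
    refine ⟨m + k, s', by omega, hcj', fun b hb ↦ ?_⟩
    rcases hs' b hb with hb' | hb'
    · exact hs b hb'
    · exact hc.not_mem_zero_of_not_mem_of_mem_succ hb' (by simp [hcj', hb])

end

/-- In the paper's 1-based indexing, `c i` is `ã_{i+1}`. -/
theorem chain_no_infinite_sharing {α : Type*} (c : ℕ → List α)
    (hchain : ∀ i, Prec (c (i + 1)) (c i))
    (hnore : ∀ i a, a ∈ c i → a ∉ c (i + 1) → ∀ j, i < j → a ∉ c j) :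
    ∀ j, (c 0).length ≤ j → ∀ a ∈ c j, a ∉ c 0 := by
  intro j hj a haj
  obtain ⟨m, s, hjm, hcj, hs⟩ := exists_eq_drop_append_of_chain hchain hnore j
  have hdrop : (c 0).drop m = [] := List.drop_eq_nil_of_le (by omega)
  rw [hcj, hdrop, List.nil_append] at haj
  exact hs a haj
end
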